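/- Let n ≥ 1 and let y ∈ K_n. The equation x·y = f admits only the trivial solution x = f (that is, for all x ∈ K_n, x·y = f implies x = f) if and only if y belongs to the submonoid of K_n generated by {a_2, a_3, …, a_n}. -/

import Mathlib

namespace Kiselman

/-- The defining relations of Kiselman's semigroup on the free monoid over `Fin n`,
where the index `i : Fin n` represents the generator `a_{i+1}` (so letters are 0-based). -/
def Rel (n : ℕ) : FreeMonoid (Fin n) → FreeMonoid (Fin n) → Prop := fun u v =>
  (∃ i : Fin n, u = .of i * .of i ∧ v = .of i) ∨
  (∃ i j : Fin n, j < i ∧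
    ((u = .of i * .of j * .of i ∧ v = .of i * .of j) ∨
     (u = .of j * .of i * .of j ∧ v = .of i * .of j)))

/-- Kiselman's semigroup (monoid) `K n`, presented by the relations `Rel n`. -/
def K (n : ℕ) : Type := (conGen (Rel n)).Quotient

instance (n : ℕ) : Monoid (K n) := inferInstanceAs (Monoid (conGen (Rel n)).Quotient)

/-- The canonical epimorphism `φ` from the free monoid onto `K n`. -/
def phi (n : ℕ) : FreeMonoid (Fin n) →* K n := Con.mk' _

/-- `φ` applied to a word given as a list of (0-based) letters. -/
def phiL (n : ℕ) (w : List (Fin n)) : K n := phi n (FreeMonoid.ofList w)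

/-- The generator `a_{i+1}` of `K n` (`i` is the 0-based index). -/
def gen {n : ℕ} (i : Fin n) : K n := phi n (FreeMonoid.of i)

/-- The word `a_hi a_{hi-1} ⋯ a_lo` (letters named 1-based), as a list of 0-based indices:
`[hi-1, hi-2, …, lo-1]` (capped at `n`). -/
def descList (n lo hi : ℕ) : List (Fin n) :=
  ((List.finRange n).filter (fun k => decide (lo ≤ k.val + 1 ∧ k.val + 1 ≤ hi))).reverse

/-- The zero element `f = a_n a_{n-1} ⋯ a_2 a_1` of `K n`. -/
def fEl (n : ℕ) : K n := phiL n (descList n 1 n)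

/-- A word `w` is canonical if for every factorization `w = p ++ [i] ++ u ++ [i] ++ q`
there are letters `j > i` and `k < i` occurring in `u`. -/
def Canonical {n : ℕ} (w : List (Fin n)) : Prop :=
  ∀ (p u q : List (Fin n)) (i : Fin n),
    w = p ++ [i] ++ u ++ [i] ++ q →
    (∃ j ∈ u, i < j) ∧ (∃ k ∈ u, k < i)

/-- The submonoid of `K n` generated by `{a_2, a_3, …, a_n}`. -/
def upper (n : ℕ) : Submonoid (K n) := Submonoid.closure (gen '' {i : Fin n | i.val ≠ 0})

/-- The submonoid of `K n` generated by `{a_1, a_2, …, a_{n-1}}`. -/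
def lower (n : ℕ) : Submonoid (K n) := Submonoid.closure (gen '' {i : Fin n | i.val + 1 ≠ n})

/-- `m(x) = min { i ∈ {0,…,n} : x ⬝ (a_i a_{i-1} ⋯ a_1) = f }`. -/
noncomputable def mIdx {n : ℕ} (x : K n) : ℕ :=
  sInf {i : ℕ | x * phiL n (descList n 1 i) = fEl n}

-- ### auxiliary development
section Aux
variable {n : ℕ}

lemma phi_rel {u v : FreeMonoid (Fin n)} (h : Rel n u v) : phi n u = phi n v := by
  have h2 : (conGen (Rel n)) u v := ConGen.Rel.of _ _ h
  exact (Con.eq _).2 h2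

lemma phiL_append (w₁ w₂ : List (Fin n)) : phiL n (w₁ ++ w₂) = phiL n w₁ * phiL n w₂ := by
  unfold phiL; rw [FreeMonoid.ofList_append, map_mul]

lemma phiL_nil : phiL n ([] : List (Fin n)) = 1 := rfl

lemma phiL_cons (c : Fin n) (w : List (Fin n)) : phiL n (c :: w) = gen c * phiL n w := by
  unfold phiL gen; rw [FreeMonoid.ofList_cons, map_mul]

lemma phiL_singleton (c : Fin n) : phiL n [c] = gen c := by
  rw [phiL_cons, phiL_nil, mul_one]

lemma gen_idem (i : Fin n) : gen i * gen i = gen i := by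
  have := phi_rel (n := n) (Or.inl ⟨i, rfl, rfl⟩)
  simpa [map_mul, gen] using this

lemma gen_bsb {i j : Fin n} (h : j < i) : gen i * gen j * gen i = gen i * gen j := by
  have := phi_rel (n := n) (Or.inr ⟨i, j, h, Or.inl ⟨rfl, rfl⟩⟩)
  simpa [map_mul, gen] using this

lemma gen_sbs {i j : Fin n} (h : j < i) : gen j * gen i * gen j = gen i * gen j := by
  have := phi_rel (n := n) (Or.inr ⟨i, j, h, Or.inr ⟨rfl, rfl⟩⟩)
  simpa [map_mul, gen] using this

/-- continuation (right-assoc) versions -/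
lemma gen_idem_z (i : Fin n) (z : K n) : gen i * (gen i * z) = gen i * z := by
  rw [← mul_assoc, gen_idem]

lemma gen_bsb_z {i j : Fin n} (h : j < i) (z : K n) :
    gen i * (gen j * (gen i * z)) = gen i * (gen j * z) := by
  rw [← mul_assoc, ← mul_assoc, gen_bsb h, mul_assoc]

lemma gen_sbs_z {i j : Fin n} (h : j < i) (z : K n) :
    gen j * (gen i * (gen j * z)) = gen i * (gen j * z) := by
  rw [← mul_assoc, ← mul_assoc, gen_sbs h, mul_assoc]

/-- multiply a word into a continuation -/
def wm (w : List (Fin n)) (z : K n) : K n := w.foldr (fun c t => gen c * t) z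

@[simp] lemma wm_nil (z : K n) : wm [] z = z := rfl
@[simp] lemma wm_cons (c : Fin n) (w : List (Fin n)) (z : K n) :
    wm (c :: w) z = gen c * wm w z := rfl
lemma wm_append (a b : List (Fin n)) (z : K n) : wm (a ++ b) z = wm a (wm b z) :=
  List.foldr_append

lemma wm_eq (w : List (Fin n)) (z : K n) : wm w z = phiL n w * z := by
  induction w with
  | nil => simp [phiL_nil]
  | cons c w ih => rw [wm_cons, ih, phiL_cons, mul_assoc]

end Aux


section Aux2
variable {n : ℕ}

/-- Lemma Y: a leading `i` before a block of strictly bigger letters and a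
closing `i` can be dropped. -/
lemma absorb_first (i : Fin n) (u : List (Fin n)) (hu : ∀ c ∈ u, i.val < c.val) (z : K n) :
    wm (i :: u) (gen i * z) = wm u (gen i * z) := by
  induction u using List.reverseRecOn generalizing z with
  | nil => simpa using gen_idem_z i z
  | append_singleton u d ih =>
    have hd : i < d := by
      have := hu d (by simp)
      exact Fin.lt_def.2 this
    have hu' : ∀ c ∈ u, i.val < c.val := fun c hc => hu c (by simp [hc])
    rw [wm_cons, wm_append]
    simp only [wm_cons, wm_nil]
    rw [← gen_sbs_z hd z]
    have := ih hu' (gen d * (gen i * z))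
    rw [wm_cons] at this
    rw [this, gen_sbs_z hd z]

/-- Lemma Z: a trailing `i` after a block of strictly smaller letters led by `i`
can be dropped. -/
lemma absorb_last (i : Fin n) (u : List (Fin n)) (hu : ∀ c ∈ u, c.val < i.val) (z : K n) :
    gen i * wm u (gen i * z) = gen i * wm u z := by
  induction u generalizing z with
  | nil => simpa using gen_idem_z i z
  | cons d u ih =>
    have hd : d < i := by
      have := hu d (by simp)
      exact Fin.lt_def.2 this
    have hu' : ∀ c ∈ u, c.val < i.val := fun c hc => hu c (by simp [hc])
    rw [wm_cons, wm_cons, ← gen_bsb_z hd (wm u (gen i * z)), ih hu',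
      gen_bsb_z hd (wm u z)]

/-- all occurrences of the minimal letter `i` in `u` may be deleted in `u·i`. -/
lemma delete_min (i : Fin n) (u : List (Fin n)) (hu : ∀ c ∈ u, i.val ≤ c.val) (z : K n) :
    wm u (gen i * z) = wm (u.filter (fun d => decide (d ≠ i))) (gen i * z) := by
  induction u with
  | nil => rfl
  | cons d u ih =>
    have hu' : ∀ c ∈ u, i.val ≤ c.val := fun c hc => hu c (by simp [hc])
    by_cases hd : i = d
    · obtain rfl := hd
      rw [List.filter_cons_of_neg (by simp)]
      have hfil : ∀ c ∈ u.filter (fun d => decide (d ≠ i)), i.val < c.val := by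
        intro c hc
        rw [List.mem_filter, decide_eq_true_eq] at hc
        rcases hc with ⟨hcu, hne⟩
        have h1 := hu' c hcu
        rcases lt_or_eq_of_le h1 with h | h
        · exact h
        · exact absurd (Fin.ext h.symm) hne
      rw [wm_cons, ih hu', ← wm_cons]
      exact absorb_first i _ hfil z
    · rw [List.filter_cons_of_pos (by simp [Ne.symm hd]), wm_cons, wm_cons, ih hu']

end Aux2

section Desc
variable {n : ℕ}

/-- letter with value `m % n` -/
def fm (hn : 0 < n) (m : ℕ) : Fin n := ⟨m % n, Nat.mod_lt m hn⟩

lemma fm_val (hn : 0 < n) {m : ℕ} (h : m < n) : (fm hn m).val = m := Nat.mod_eq_of_lt h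

/-- the descending word `[hi-1, hi-2, …, lo]` -/
def dsg (hn : 0 < n) (lo : ℕ) : ℕ → List (Fin n)
  | 0 => []
  | hi+1 => if lo ≤ hi then fm hn hi :: dsg hn lo hi else []

lemma dsg_nil (hn : 0 < n) {lo hi : ℕ} (h : hi ≤ lo) : dsg hn lo hi = [] := by
  cases hi with
  | zero => rfl
  | succ m => exact if_neg (by omega)

lemma dsg_succ (hn : 0 < n) {lo hi : ℕ} (h : lo ≤ hi) :
    dsg hn lo (hi+1) = fm hn hi :: dsg hn lo hi := if_pos h

lemma dsg_mem (hn : 0 < n) {lo hi : ℕ} (hhi : hi ≤ n) {c : Fin n}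
    (hc : c ∈ dsg hn lo hi) : lo ≤ c.val ∧ c.val < hi := by
  induction hi with
  | zero => simp [dsg] at hc
  | succ m ih =>
    by_cases h : lo ≤ m
    · rw [dsg_succ hn h] at hc
      rcases List.mem_cons.1 hc with rfl | hc
      · rw [fm_val hn (by omega)]; omega
      · have := ih (by omega) hc; omega
    · rw [dsg_nil hn (by omega)] at hc; simp at hc

lemma dsg_split (hn : 0 < n) {lo m hi : ℕ} (hlo : lo ≤ m) (hm : m < hi) :
    dsg hn lo hi = dsg hn (m+1) hi ++ [fm hn m] ++ dsg hn lo m := by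
  induction hi with
  | zero => omega
  | succ t ih =>
    rcases Nat.lt_succ_iff_lt_or_eq.1 hm with h | h
    · rw [dsg_succ hn (by omega), dsg_succ hn (by omega), ih h]
      simp
    · subst h
      rw [dsg_succ hn hlo, dsg_nil hn (le_refl (m+1))]
      simp

lemma dsg_step (hn : 0 < n) {lo : ℕ} (h : lo < n) :
    dsg hn lo n = dsg hn (lo+1) n ++ [fm hn lo] := by
  have := dsg_split hn (le_refl lo) h
  rw [dsg_nil hn (le_refl lo)] at this
  simpa using this

lemma dsg_length (hn : 0 < n) (lo hi : ℕ) : (dsg hn lo hi).length = hi - lo := by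
  induction hi with
  | zero => simp [dsg]
  | succ m ih =>
    by_cases h : lo ≤ m
    · rw [dsg_succ hn h]; simp [ih]; omega
    · rw [dsg_nil hn (by omega)]; simp; omega

lemma dsg_getElem (hn : 0 < n) (lo hi : ℕ) (t : ℕ) (h : t < (dsg hn lo hi).length) :
    (dsg hn lo hi)[t] = fm hn (hi - 1 - t) := by
  induction hi generalizing t with
  | zero => simp [dsg] at h
  | succ m ih =>
    have hlen := dsg_length hn lo (m+1)
    have hlo : lo ≤ m := by by_contra hc; rw [dsg_nil hn (by omega)] at h; simp at h
    rw [List.getElem_of_eq (dsg_succ hn hlo) h]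
    rw [dsg_succ hn hlo] at h
    cases t with
    | zero => simp
    | succ t =>
      simp only [List.getElem_cons_succ]
      rw [ih t (by simpa using h)]
      congr 1
      omega

/-- absorption: the zero of the sub-semigroup on letters `≥ lo` kills such letters. -/
lemma dsg_absorb (hn : 0 < n) {lo : ℕ} (c : Fin n) (hc : lo ≤ c.val) (z : K n) :
    wm (dsg hn lo n) (gen c * z) = wm (dsg hn lo n) z := by
  have hsplit := dsg_split hn hc c.isLt
  have hfm : fm hn c.val = c := Fin.ext (fm_val hn c.isLt)
  rw [hsplit, hfm]
  rw [wm_append, wm_append, wm_append, wm_append]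
  simp only [wm_cons, wm_nil]
  congr 1
  exact absorb_last c _ (fun d hd => (dsg_mem hn (le_of_lt c.isLt) hd).2) z

end Desc

section Act
variable {n : ℕ}

/-- transition of the greedy descending-subsequence automaton -/
def step (c : Fin n) (s : ℕ) : ℕ := if s = c.val then s + 1 else s

/-- action of a word (rightmost letter acts first) -/
def act (w : List (Fin n)) (s : ℕ) : ℕ := w.foldr step s

@[simp] lemma act_nil (s : ℕ) : act ([] : List (Fin n)) s = s := rfl
@[simp] lemma act_cons (c : Fin n) (w : List (Fin n)) (s : ℕ) :
    act (c :: w) s = step c (act w s) := rfl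
lemma act_append (a b : List (Fin n)) (s : ℕ) : act (a ++ b) s = act a (act b s) :=
  List.foldr_append

lemma step_le (c : Fin n) (s : ℕ) : s ≤ step c s := by
  unfold step; split <;> omega

lemma step_noop {c : Fin n} {s : ℕ} (h : s ≠ c.val) : step c s = s := if_neg h

lemma act_le_self (w : List (Fin n)) (s : ℕ) : s ≤ act w s := by
  induction w with
  | nil => simp
  | cons c w ih => calc s ≤ act w s := ih
                     _ ≤ step c (act w s) := step_le _ _

lemma step_le_n (c : Fin n) {s : ℕ} (h : s ≤ n) : step c s ≤ n := by
  unfold step; split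
  · omega
  · exact h

lemma act_le_n (w : List (Fin n)) {s : ℕ} (h : s ≤ n) : act w s ≤ n := by
  induction w with
  | nil => simpa
  | cons c w ih => exact step_le_n c ih

lemma act_no_zero (w : List (Fin n)) (h : ∀ c ∈ w, c.val ≠ 0) : act w 0 = 0 := by
  induction w with
  | nil => rfl
  | cons c w ih =>
    have h' : ∀ c ∈ w, c.val ≠ 0 := fun c hc => h c (by simp [hc])
    rw [act_cons, ih h', step_noop (fun hc => (h c (by simp)) hc.symm)]

lemma act_pos (w : List (Fin n)) (h : ∃ c ∈ w, c.val = 0) : 1 ≤ act w 0 := by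
  induction w with
  | nil => simp at h
  | cons c w ih =>
    rw [act_cons]
    rcases h with ⟨d, hd, hd0⟩
    rcases List.mem_cons.1 hd with rfl | hd
    · rcases Nat.eq_zero_or_pos (act w 0) with h0 | h0
      · rw [h0]; unfold step; rw [hd0]; simp
      · calc 1 ≤ act w 0 := h0
          _ ≤ step d (act w 0) := step_le _ _
    · calc 1 ≤ act w 0 := ih ⟨d, hd, hd0⟩
        _ ≤ step c (act w 0) := step_le _ _

lemma act_filter (c : Fin n) (w : List (Fin n)) {s : ℕ} (h : c.val < s) :
    act (w.filter (fun d => decide (d ≠ c))) s = act w s := by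
  induction w with
  | nil => rfl
  | cons d w ih =>
    by_cases hd : d = c
    · subst hd
      rw [List.filter_cons_of_neg (by simp), ih, act_cons, step_noop]
      have := act_le_self w s
      omega
    · rw [List.filter_cons_of_pos (by simp [hd]), act_cons, act_cons, ih]

lemma act_dsg (hn : 0 < n) (lo : ℕ) {s : ℕ} (h1 : lo ≤ s) (h2 : s ≤ n) :
    act (dsg hn lo n) s = n := by
  by_cases hlo : lo < n
  · have hrec : dsg hn lo n = dsg hn (lo+1) n ++ [fm hn lo] := dsg_step hn hlo
    rw [hrec, act_append]
    have hstep : lo + 1 ≤ act [fm hn lo] s ∧ act [fm hn lo] s ≤ n := by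
      simp only [act_cons, act_nil]
      unfold step
      rw [fm_val hn hlo]
      split <;> omega
    have : n - (lo+1) < n - lo := by omega
    exact act_dsg hn (lo+1) hstep.1 hstep.2
  · rw [dsg_nil hn (by omega)]
    simp; omega
termination_by n - lo

end Act

section Hom
variable {n : ℕ}

def actHom (n : ℕ) : FreeMonoid (Fin n) →* Function.End ℕ :=
  FreeMonoid.lift (fun c => (step c : Function.End ℕ))

lemma endMul (f g : Function.End ℕ) (s : ℕ) : (f * g) s = f (g s) := rfl
lemma endOne (s : ℕ) : (1 : Function.End ℕ) s = s := rfl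

lemma actHom_ofList (w : List (Fin n)) (s : ℕ) :
    actHom n (FreeMonoid.ofList w) s = act w s := by
  induction w with
  | nil =>
    have : FreeMonoid.ofList ([] : List (Fin n)) = 1 := rfl
    rw [this, map_one]; rfl
  | cons c w ih =>
    rw [FreeMonoid.ofList_cons, map_mul, endMul, ih,
      show actHom n (FreeMonoid.of c) = (step c : Function.End ℕ) from FreeMonoid.lift_eval_of _ _]
    rfl

lemma actHom_rel : ∀ u v : FreeMonoid (Fin n), Rel n u v → actHom n u = actHom n v := by
  intro u v h
  rcases h with ⟨i, rfl, rfl⟩ | ⟨i, j, hij, ⟨rfl, rfl⟩ | ⟨rfl, rfl⟩⟩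
  · unfold actHom
    simp only [map_mul, FreeMonoid.lift_eval_of]
    funext s
    show step i (step i s) = step i s
    unfold step; split_ifs <;> omega
  · have hij' : j.val < i.val := hij
    unfold actHom
    simp only [map_mul, FreeMonoid.lift_eval_of]
    funext s
    show step i (step j (step i s)) = step i (step j s)
    unfold step; split_ifs <;> omega
  · have hij' : j.val < i.val := hij
    unfold actHom
    simp only [map_mul, FreeMonoid.lift_eval_of]
    funext s
    show step j (step i (step j s)) = step i (step j s)
    unfold step; split_ifs <;> omega

def psiK (n : ℕ) : K n →* Function.End ℕ :=
  Con.lift _ (actHom n) (Con.conGen_le.2 fun u v h => (Con.ker_rel _).2 (actHom_rel u v h))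

lemma psiK_phiL (w : List (Fin n)) (s : ℕ) : psiK n (phiL n w) s = act w s := by
  have h1 : psiK n (phiL n w) = actHom n (FreeMonoid.ofList w) := by
    unfold psiK phiL phi
    exact Con.lift_mk' _ _
  rw [h1, actHom_ofList]

end Hom


section Main
variable {n : ℕ}

/-- THE key lemma: a word whose greedy automaton climbs from `lo` to `n`
(and whose letters are all `≥ lo`) equals the descending word `[n-1,…,lo]`. -/
lemma main_lemma (hn : 0 < n) :
    ∀ (k lo : ℕ) (w : List (Fin n)), n - lo + w.length ≤ k →
    (∀ c ∈ w, lo ≤ c.val) → act w lo = n → phiL n w = phiL n (dsg hn lo n) := by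
  intro k
  induction k with
  | zero =>
    intro lo w hk hw ha
    have hw0 : w = [] := List.length_eq_zero_iff.1 (by omega)
    subst hw0
    rw [dsg_nil hn (by omega)]
  | succ k ih =>
    intro lo w hk hw ha
    by_cases hlo : lo < n
    · rcases List.eq_nil_or_concat w with rfl | ⟨w', c, rfl⟩
      · simp at ha; omega
      · rw [List.concat_eq_append] at hk hw ha ⊢
        have hc : lo ≤ c.val := hw c (by simp)
        have hw' : ∀ d ∈ w', lo ≤ d.val := fun d hd => hw d (by simp [hd])
        have ha' : act w' (step c lo) = n := by
          rw [act_append] at ha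
          simpa using ha
        by_cases hcc : c.val = lo
        · have hstep : step c lo = lo + 1 := by unfold step; rw [if_pos hcc.symm]
          rw [hstep] at ha'
          set w'' := w'.filter (fun d => decide (d ≠ c)) with hw''def
          have hw'' : ∀ d ∈ w'', lo + 1 ≤ d.val := by
            intro d hd
            rw [hw''def, List.mem_filter, decide_eq_true_eq] at hd
            rcases hd with ⟨hdw, hne⟩
            have h1 := hw' d hdw
            rcases lt_or_eq_of_le h1 with h | h
            · omega
            · exact absurd (Fin.ext (by omega)) hne
          have ha'' : act w'' (lo + 1) = n := by
            rw [hw''def, act_filter c w' (by omega)]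
            exact ha'
          have hlen : n - (lo + 1) + w''.length ≤ k := by
            have h1 : w''.length ≤ w'.length := List.length_filter_le _ _
            have h2 : (w' ++ [c]).length = w'.length + 1 := by simp
            omega
          have h1 : phiL n w'' = phiL n (dsg hn (lo+1) n) := ih (lo+1) w'' hlen hw'' ha''
          -- assemble using wm
          have e1 : phiL n (w' ++ [c]) = wm w' (gen c * 1) := by
            rw [wm_eq, phiL_append, phiL_singleton, mul_one]
          have e2 : wm w' (gen c * 1) = wm w'' (gen c * 1) :=
            delete_min c w' (fun d hd => by have := hw' d hd; omega) 1
          have e3 : wm w'' (gen c * 1) = phiL n (dsg hn (lo+1) n) * (gen c * 1) := by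
            rw [wm_eq, h1]
          have hfm : fm hn lo = c := Fin.ext (by rw [fm_val hn hlo]; omega)
          have e4 : phiL n (dsg hn (lo+1) n) * (gen c * 1) = phiL n (dsg hn lo n) := by
            rw [mul_one, ← phiL_singleton, ← phiL_append, ← hfm, ← dsg_step hn hlo]
          rw [e1, e2, e3, e4]
        · have hcgt : lo < c.val := by omega
          have hstep : step c lo = lo := step_noop (by omega)
          rw [hstep] at ha'
          have hlen : n - lo + w'.length ≤ k := by
            have h2 : (w' ++ [c]).length = w'.length + 1 := by simp
            omega
          have h1 : phiL n w' = phiL n (dsg hn lo n) := ih lo w' hlen hw' ha'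
          calc phiL n (w' ++ [c]) = phiL n w' * gen c := by
                rw [phiL_append, phiL_singleton]
            _ = phiL n (dsg hn lo n) * (gen c * 1) := by rw [h1, mul_one]
            _ = wm (dsg hn lo n) (gen c * 1) := (wm_eq _ _).symm
            _ = wm (dsg hn lo n) 1 := dsg_absorb hn c hc 1
            _ = phiL n (dsg hn lo n) := by rw [wm_eq, mul_one]
    · cases w with
      | nil => rw [dsg_nil hn (by omega)]
      | cons c w =>
        have := hw c (by simp)
        have := c.isLt
        omega

lemma descList_eq (hn : 0 < n) : descList n 1 n = dsg hn 0 n := by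
  have hfil : (List.finRange n).filter
      (fun k => decide (1 ≤ k.val + 1 ∧ k.val + 1 ≤ n)) = List.finRange n := by
    apply List.filter_eq_self.mpr
    intro a _
    simp only [decide_eq_true_eq]
    exact ⟨by omega, a.isLt⟩
  unfold descList
  rw [hfil]
  apply List.ext_getElem
  · rw [List.length_reverse, List.length_finRange, dsg_length]; omega
  · intro i h1 h2
    have hi : i < n := by rw [dsg_length] at h2; omega
    rw [List.getElem_reverse, List.getElem_finRange, dsg_getElem]
    apply Fin.ext
    simp only [Fin.coe_cast]
    rw [fm_val hn (by omega)]
    simp [List.length_finRange]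

lemma fEl_eq (hn : 0 < n) : fEl n = phiL n (dsg hn 0 n) := by
  rw [fEl, descList_eq hn]

lemma mem_upper_of_no_zero (v : List (Fin n)) (hv : ∀ c ∈ v, c.val ≠ 0) :
    phiL n v ∈ upper n := by
  induction v with
  | nil => rw [phiL_nil]; exact one_mem _
  | cons c v ih =>
    rw [phiL_cons]
    exact mul_mem (Submonoid.subset_closure ⟨c, hv c (by simp), rfl⟩)
      (ih fun c hc => hv c (by simp [hc]))

lemma upper_word {y : K n} (hy : y ∈ upper n) :
    ∃ v : List (Fin n), (∀ c ∈ v, c.val ≠ 0) ∧ y = phiL n v := by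
  refine Submonoid.closure_induction ?_ ?_ ?_ hy
  · rintro x ⟨i, hi, rfl⟩
    exact ⟨[i], by simpa using hi, (phiL_singleton i).symm⟩
  · exact ⟨[], by simp, phiL_nil.symm⟩
  · rintro a b _ _ ⟨va, hva, rfl⟩ ⟨vb, hvb, rfl⟩
    refine ⟨va ++ vb, ?_, (phiL_append va vb).symm⟩
    intro c hc
    rcases List.mem_append.1 hc with h | h
    · exact hva c h
    · exact hvb c h

lemma exists_word (x : K n) : ∃ w : List (Fin n), x = phiL n w := by
  obtain ⟨u, hu⟩ := Con.mk'_surjective (c := conGen (Rel n)) x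
  exact ⟨FreeMonoid.toList u, by rw [← hu]; unfold phiL; rw [FreeMonoid.ofList_toList]; rfl⟩

/-- The equation `x * y = f` admits only the trivial solution `x = f` if and only if
`y` lies in the submonoid generated by `a_2, …, a_n`. -/
theorem trivial_solution_iff (n : ℕ) (hn : 1 ≤ n) (y : K n) :
    (∀ x : K n, x * y = fEl n → x = fEl n) ↔ y ∈ upper n := by
  have hn' : 0 < n := hn
  constructor
  · intro H
    obtain ⟨v, hyv⟩ := exists_word y
    by_cases h0 : ∀ c ∈ v, c.val ≠ 0
    · rw [hyv]; exact mem_upper_of_no_zero v h0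
    · push_neg at h0
      obtain ⟨c₀, hc₀v, hc₀⟩ := h0
      have h1 : 1 ≤ act v 0 := act_pos v ⟨c₀, hc₀v, hc₀⟩
      have h2 : act v 0 ≤ n := act_le_n v (Nat.zero_le n)
      set x₀ := phiL n (dsg hn' 1 n) with hx₀def
      have hx₀y : x₀ * y = fEl n := by
        rw [hx₀def, hyv, ← phiL_append, fEl_eq hn']
        apply main_lemma hn' (n + (dsg hn' 1 n ++ v).length) 0 _ (by omega)
          (fun c _ => Nat.zero_le _)
        rw [act_append]
        exact act_dsg hn' 1 h1 h2
      have hx₀ := H x₀ hx₀y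
      have e1 : psiK n x₀ 0 = psiK n (fEl n) 0 := by rw [hx₀]
      rw [hx₀def, psiK_phiL, fEl_eq hn', psiK_phiL] at e1
      have e2 : act (dsg hn' 1 n) 0 = 0 := by
        apply act_no_zero
        intro c hc
        have := (dsg_mem hn' (le_refl n) hc).1
        omega
      have e3 : act (dsg hn' 0 n) 0 = n := act_dsg hn' 0 (le_refl 0) (Nat.zero_le n)
      rw [e2, e3] at e1
      omega
  · intro hy x hxy
    obtain ⟨v, hv0, rfl⟩ := upper_word hy
    obtain ⟨w, rfl⟩ := exists_word x
    rw [← phiL_append] at hxy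
    have e1 : act (w ++ v) 0 = n := by
      have := congrArg (fun t => psiK n t 0) hxy
      simpa [psiK_phiL, fEl_eq hn', act_dsg hn' 0 (le_refl 0) (Nat.zero_le n)] using this
    rw [act_append, act_no_zero v hv0] at e1
    rw [fEl_eq hn']
    exact main_lemma hn' (n + w.length) 0 w (by omega) (fun c _ => Nat.zero_le _) e1

end Main
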